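/- arXiv:2604.13563 — 2 statements merged into one kernel-verified Lean document; each statement's English description precedes it below -/
import Mathlib

section
/- For every index i with r < i ≤ n, the pair (λ_i^{−1}, u_i) is a generalized eigenpair of the pencil (Ĉ_P, C_P): Ĉ_P u_i = λ_i^{−1} C_P u_i. -/
open Matrix

/-- The columns `u_1, …, u_r` (first `r` columns of `U`) as an `n × r` matrix. -/
def firstCols {n r : ℕ} (hr : r ≤ n) (U : Matrix (Fin n) (Fin n) ℝ) :
    Matrix (Fin n) (Fin r) ℝ :=
  fun i j => U i (Fin.castLE hr j)

/-- The CIS projector `Π_r = C_π U_r U_rᵀ`. -/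
def cisProj {n r : ℕ} (hr : r ≤ n) (Cπ U : Matrix (Fin n) (Fin n) ℝ) :
    Matrix (Fin n) (Fin n) ℝ :=
  Cπ * firstCols hr U * (firstCols hr U)ᵀ

/-- The approximate posterior covariance
`Ĉ_P = Π_r C_P Π_rᵀ + (I − Π_r) C_π (I − Π_rᵀ)`. -/
def approxPostCov {n r : ℕ} (hr : r ≤ n) (Cπ CP U : Matrix (Fin n) (Fin n) ℝ) :
    Matrix (Fin n) (Fin n) ℝ :=
  cisProj hr Cπ U * CP * (cisProj hr Cπ U)ᵀ +
    (1 - cisProj hr Cπ U) * Cπ * (1 - (cisProj hr Cπ U)ᵀ)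

/-- For every index `i` with `r < i ≤ n` (zero-based: `r ≤ i`),
the pair `(λ_i⁻¹, u_i)` is a generalized eigenpair of the pencil `(Ĉ_P, C_P)`:
`Ĉ_P u_i = λ_i⁻¹ C_P u_i`. -/
theorem approxPostCov_eigenpair {n r : ℕ} (hr : r ≤ n)
    (Cπ CP : Matrix (Fin n) (Fin n) ℝ) (hCπ : Cπ.PosDef) (hCP : CP.PosDef)
    (U : Matrix (Fin n) (Fin n) ℝ) (lam : Fin n → ℝ) (hlam : ∀ i, 0 < lam i)
    (heig : ∀ i, CP *ᵥ (fun k => U k i) = lam i • (Cπ *ᵥ (fun k => U k i)))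
    (hnorm : Uᵀ * Cπ * U = 1) :
    ∀ i : Fin n, r ≤ (i : ℕ) →
      approxPostCov hr Cπ CP U *ᵥ (fun k => U k i)
        = (lam i)⁻¹ • (CP *ᵥ (fun k => U k i)) := by
  intro i hi
  set v : Fin n → ℝ := fun k => U k i with hv
  set F := firstCols hr U with hF
  -- key: Fᵀ (Cπ v) = 0
  have hz : Fᵀ *ᵥ (Cπ *ᵥ v) = 0 := by
    funext j
    have hne : Fin.castLE hr j ≠ i := by
      intro h
      have : (j : ℕ) = (i : ℕ) := by
        simpa using congrArg Fin.val h
      omega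
    have h1 : (Uᵀ * Cπ * U) (Fin.castLE hr j) i = 0 := by
      rw [hnorm, Matrix.one_apply_ne hne]
    calc (Fᵀ *ᵥ (Cπ *ᵥ v)) j
        = ∑ k, ∑ m, U k (Fin.castLE hr j) * (Cπ k m * U m i) := by
          simp [Matrix.mulVec, dotProduct, hF, firstCols, Matrix.transpose_apply,
            Finset.mul_sum, hv]
      _ = ∑ m, ∑ k, U k (Fin.castLE hr j) * (Cπ k m * U m i) := Finset.sum_comm
      _ = (Uᵀ * Cπ * U) (Fin.castLE hr j) i := by
          simp [Matrix.mul_apply, Matrix.transpose_apply, Finset.sum_mul, mul_assoc]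
      _ = 0 := h1
  have hCπsymm : Cπᵀ = Cπ := by
    have := hCπ.1
    simpa [Matrix.IsHermitian] using this
  have hPt : (cisProj hr Cπ U)ᵀ *ᵥ v = 0 := by
    have : (cisProj hr Cπ U)ᵀ = F * (Fᵀ * Cπ) := by
      simp [cisProj, Matrix.transpose_mul, hCπsymm, hF, Matrix.mul_assoc]
    rw [this, ← Matrix.mulVec_mulVec, ← Matrix.mulVec_mulVec] at *
    rw [hz]
    simp
  have hPv : (cisProj hr Cπ U) *ᵥ (Cπ *ᵥ v) = Cπ *ᵥ (F *ᵥ (Fᵀ *ᵥ (Cπ *ᵥ v))) := by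
    simp [cisProj, ← Matrix.mulVec_mulVec, hF]
  have key : approxPostCov hr Cπ CP U *ᵥ v = Cπ *ᵥ v := by
    simp only [approxPostCov, Matrix.add_mulVec, ← Matrix.mulVec_mulVec, hPt]
    simp only [Matrix.mulVec_zero, Matrix.sub_mulVec, Matrix.one_mulVec, sub_zero,
      zero_add]
    rw [hPt, sub_zero, hPv, hz]
    simp
  rw [key, heig i, smul_smul, inv_mul_cancel₀ (ne_of_gt (hlam i)), one_smul]
end

section
/- The multiset of eigenvalues (with multiplicity) of the symmetric positive definite matrix C_P^{−1/2} Ĉ_P C_P^{−1/2} equals the multiset consisting of the value 1 with multiplicity r together with the values λ_{r+1}^{−1}, …, λ_n^{−1}. Consequently the Förstner distance satisfies d_F(Ĉ_P, C_P) = Σ_{i=r+1}^n (log λ_i)². -/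
open Matrix

open scoped ComplexOrder in
/-- The square root of a positive semidefinite matrix, as `Matrix.PosSemidef.sqrt` was defined
in older Mathlib (removed since): `U * diagonal (√ eigenvalues) * Uᴴ`. -/
noncomputable def posSemidefSqrt {n : Type*} [Fintype n] [DecidableEq n] {𝕜 : Type*} [RCLike 𝕜]
    {A : Matrix n n 𝕜} (hA : A.PosSemidef) : Matrix n n 𝕜 :=
  hA.1.eigenvectorUnitary.1 * diagonal ((↑) ∘ Real.sqrt ∘ hA.1.eigenvalues) *
    (star hA.1.eigenvectorUnitary : Matrix n n 𝕜)

open Classical in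
/-- The Förstner distance `d_F(A,B) = Σ_i (log σ_i)²` where the `σ_i` are the
eigenvalues of `B^{-1/2} A B^{-1/2}` (and `0` in degenerate, unused cases). -/
noncomputable def forstnerDist {n : ℕ} (A B : Matrix (Fin n) (Fin n) ℝ) : ℝ :=
  if hB : B.PosDef then
    if h : ((posSemidefSqrt hB.posSemidef)⁻¹ * A * (posSemidefSqrt hB.posSemidef)⁻¹).IsHermitian then
      ∑ i, Real.log (h.eigenvalues i) ^ 2
    else 0
  else 0

lemma posSemidefSqrt_posSemidef_aux {n : ℕ} {A : Matrix (Fin n) (Fin n) ℝ} (hA : A.PosSemidef) :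
    (posSemidefSqrt hA).PosSemidef := by
  have hd : (diagonal ((↑) ∘ Real.sqrt ∘ hA.1.eigenvalues : Fin n → ℝ)).PosSemidef :=
    Matrix.PosSemidef.diagonal fun i => by simp [Real.sqrt_nonneg]
  have := hd.mul_mul_conjTranspose_same (hA.1.eigenvectorUnitary : Matrix (Fin n) (Fin n) ℝ)
  rwa [← Matrix.star_eq_conjTranspose] at this

lemma posSemidefSqrt_mul_self_aux {n : ℕ} {A : Matrix (Fin n) (Fin n) ℝ} (hA : A.PosSemidef) :
    posSemidefSqrt hA * posSemidefSqrt hA = A := by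
  have hWW : star (hA.1.eigenvectorUnitary : Matrix (Fin n) (Fin n) ℝ)
      * (hA.1.eigenvectorUnitary : Matrix (Fin n) (Fin n) ℝ) = 1 :=
    Matrix.mem_unitaryGroup_iff'.mp hA.1.eigenvectorUnitary.2
  have hDD : diagonal (RCLike.ofReal ∘ Real.sqrt ∘ hA.1.eigenvalues : Fin n → ℝ)
      * diagonal (RCLike.ofReal ∘ Real.sqrt ∘ hA.1.eigenvalues : Fin n → ℝ)
      = diagonal (RCLike.ofReal ∘ hA.1.eigenvalues) := by
    rw [Matrix.diagonal_mul_diagonal]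
    congr 1
    funext i
    simp [Real.mul_self_sqrt (hA.eigenvalues_nonneg i)]
  unfold posSemidefSqrt
  have hspec : A = (hA.1.eigenvectorUnitary : Matrix (Fin n) (Fin n) ℝ)
      * diagonal (RCLike.ofReal ∘ hA.1.eigenvalues)
      * star (hA.1.eigenvectorUnitary : Matrix (Fin n) (Fin n) ℝ) := hA.1.spectral_theorem
  conv_rhs => rw [hspec]
  rw [← hDD]
  simp only [Matrix.mul_assoc]
  rw [← Matrix.mul_assoc (star _) (hA.1.eigenvectorUnitary : Matrix (Fin n) (Fin n) ℝ), hWW, one_mul]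

lemma posDef_conj_aux {n : ℕ} {A : Matrix (Fin n) (Fin n) ℝ} (B : Matrix (Fin n) (Fin n) ℝ)
    (hA : A.PosDef) (hB : IsUnit B.det) : (B * A * Bᵀ).PosDef := by
  refine Matrix.PosDef.of_dotProduct_mulVec_pos ?_ ?_
  · have h := Matrix.isHermitian_mul_mul_conjTranspose B hA.1
    rwa [Matrix.conjTranspose_eq_transpose_of_trivial] at h
  · intro x hx
    have hBT : IsUnit (Bᵀ).det := by rwa [Matrix.det_transpose]
    have hinj : Function.Injective (Bᵀ.mulVec) :=
      Matrix.mulVec_injective_iff_isUnit.mpr ((Matrix.isUnit_iff_isUnit_det _).mpr hBT)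
    have hy : Bᵀ *ᵥ x ≠ 0 := fun h => hx (hinj (by simpa using h))
    have h2 := hA.dotProduct_mulVec_pos hy
    have key : star x ⬝ᵥ ((B * A * Bᵀ) *ᵥ x) = star (Bᵀ *ᵥ x) ⬝ᵥ (A *ᵥ (Bᵀ *ᵥ x)) := by
      rw [star_trivial, star_trivial, ← Matrix.mulVec_mulVec, ← Matrix.mulVec_mulVec,
        Matrix.dotProduct_mulVec, ← Matrix.mulVec_transpose]
    rw [key]; exact h2

lemma charpoly_conj_aux {n : ℕ} (P A : Matrix (Fin n) (Fin n) ℝ) (hP : IsUnit P.det) :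
    (P * A * P⁻¹).charpoly = A.charpoly := by
  have hPP : P * P⁻¹ = 1 := Matrix.mul_nonsing_inv P hP
  have key : charmatrix (P * A * P⁻¹)
      = (Polynomial.C : ℝ →+* Polynomial ℝ).mapMatrix P * charmatrix A * (Polynomial.C : ℝ →+* Polynomial ℝ).mapMatrix P⁻¹ := by
    unfold charmatrix
    rw [mul_sub, sub_mul, _root_.map_mul, _root_.map_mul]
    congr 1
    rw [← (Matrix.scalar_commute (Polynomial.X : Polynomial ℝ) (Commute.all _) ((Polynomial.C : ℝ →+* Polynomial ℝ).mapMatrix P)).eq,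
      mul_assoc, ← _root_.map_mul, hPP, _root_.map_one, mul_one]
  have h2 := congrArg Matrix.det key
  rw [Matrix.charpoly, h2, Matrix.det_mul, Matrix.det_mul, ← RingHom.map_det,
    ← RingHom.map_det, ← Matrix.charpoly, mul_comm, ← mul_assoc, ← _root_.map_mul,
    Matrix.det_nonsing_inv, Ring.inverse_mul_cancel _ hP, _root_.map_one, one_mul]

lemma charpoly_diagonal_aux {n : ℕ} (d : Fin n → ℝ) :
    (Matrix.diagonal d).charpoly = ∏ i, (Polynomial.X - Polynomial.C (d i)) := by
  unfold Matrix.charpoly charmatrix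
  rw [Matrix.scalar_apply, RingHom.mapMatrix_apply, Matrix.diagonal_map (map_zero _),
    Matrix.diagonal_sub, Matrix.det_diagonal]

lemma filter_lt_eq_map_aux {n r : ℕ} (hr : r ≤ n) :
    Finset.filter (fun j : Fin n => (j : ℕ) < r) Finset.univ
      = Finset.map (Fin.castLEEmb hr) Finset.univ := by
  ext k
  simp only [Finset.mem_filter, Finset.mem_univ, true_and, Finset.mem_map, Fin.castLEEmb,
    Function.Embedding.coeFn_mk]
  constructor
  · intro hk; exact ⟨⟨(k : ℕ), hk⟩, by simp [Fin.ext_iff]⟩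
  · rintro ⟨j, rfl⟩; simp

lemma sum_castLE_aux {n r : ℕ} (hr : r ≤ n) (f : Fin n → ℝ) :
    ∑ j : Fin r, f (Fin.castLE hr j) = ∑ j : Fin n, if (j : ℕ) < r then f j else 0 := by
  rw [← Finset.sum_filter, filter_lt_eq_map_aux hr, Finset.sum_map]
  rfl

/-- The multiset of eigenvalues (with multiplicity) of the symmetric
positive definite matrix `C_P^{-1/2} Ĉ_P C_P^{-1/2}` is `{1 (r times)} ∪ {λ_i⁻¹ : i > r}`;
consequently `d_F(Ĉ_P, C_P) = Σ_{i>r} (log λ_i)²`. -/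
theorem approxPostCov_eigenvalues_forstner {n r : ℕ} (hr : r ≤ n)
    (Cπ CP : Matrix (Fin n) (Fin n) ℝ) (hCπ : Cπ.PosDef) (hCP : CP.PosDef)
    (U : Matrix (Fin n) (Fin n) ℝ) (lam : Fin n → ℝ) (hlam : ∀ i, 0 < lam i)
    (heig : ∀ i, CP *ᵥ (fun k => U k i) = lam i • (Cπ *ᵥ (fun k => U k i)))
    (hnorm : Uᵀ * Cπ * U = 1) :
    ((posSemidefSqrt hCP.posSemidef)⁻¹ * approxPostCov hr Cπ CP U * (posSemidefSqrt hCP.posSemidef)⁻¹).PosDef ∧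
    (∀ hM : ((posSemidefSqrt hCP.posSemidef)⁻¹ * approxPostCov hr Cπ CP U *
        (posSemidefSqrt hCP.posSemidef)⁻¹).IsHermitian,
      (Finset.univ.val.map hM.eigenvalues : Multiset ℝ)
        = Multiset.replicate r (1 : ℝ) +
          (Finset.univ.filter (fun i : Fin n => r ≤ (i : ℕ))).val.map (fun i => (lam i)⁻¹)) ∧
    forstnerDist (approxPostCov hr Cπ CP U) CP
      = ∑ i ∈ Finset.univ.filter (fun i : Fin n => r ≤ (i : ℕ)), Real.log (lam i) ^ 2 := by
  -- abbreviations
  have hCπs : Cπᵀ = Cπ := by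
    rw [← Matrix.conjTranspose_eq_transpose_of_trivial]; exact hCπ.1
  have hnorm' : Uᵀ * (Cπ * U) = 1 := by rw [← Matrix.mul_assoc]; exact hnorm
  have hB1 : Cπ * U * Uᵀ = 1 := mul_eq_one_comm.mp hnorm'
  have hU2 : U * (Uᵀ * Cπ) = 1 := mul_eq_one_comm.mp hnorm
  have hBdet : IsUnit (Cπ * U).det := Matrix.isUnit_det_of_right_inverse hB1
  have hmid : ∀ Y : Matrix (Fin n) (Fin n) ℝ, Uᵀ * (Cπ * (U * Y)) = Y := fun Y => by
    rw [← Matrix.mul_assoc, ← Matrix.mul_assoc, hnorm, one_mul]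
  set Λ := Matrix.diagonal lam with hΛ
  set E := Matrix.diagonal (fun i : Fin n => if (i : ℕ) < r then (1 : ℝ) else 0) with hE
  set G := Matrix.diagonal (fun i : Fin n => if (i : ℕ) < r then (0 : ℝ) else 1) with hG
  set D := Matrix.diagonal (fun i : Fin n => if (i : ℕ) < r then lam i else 1) with hD
  set Λi := Matrix.diagonal (fun i : Fin n => (lam i)⁻¹) with hΛi
  -- CP * U = Cπ * U * Λ
  have hCPU : CP * U = Cπ * U * Λ := by
    ext i j
    have h := congrFun (heig j) i
    simp only [Matrix.mulVec, dotProduct, Pi.smul_apply, smul_eq_mul] at h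
    rw [hΛ, Matrix.mul_diagonal, Matrix.mul_apply, Matrix.mul_apply]
    rw [show (∑ k, CP i k * U k j) = lam j * ∑ k, Cπ i k * U k j from h, mul_comm]
  have hCPeq : CP = Cπ * U * Λ * (Uᵀ * Cπ) := by
    calc CP = CP * 1 := (mul_one _).symm
      _ = CP * (U * (Uᵀ * Cπ)) := by rw [hU2]
      _ = (CP * U) * (Uᵀ * Cπ) := by rw [Matrix.mul_assoc]
      _ = Cπ * U * Λ * (Uᵀ * Cπ) := by rw [hCPU]
  -- projector identities
  have hUr : firstCols hr U * (firstCols hr U)ᵀ = U * E * Uᵀ := by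
    ext i j
    rw [Matrix.mul_apply]
    simp only [Matrix.transpose_apply, firstCols]
    rw [sum_castLE_aux hr (fun k => U i k * U j k), Matrix.mul_apply]
    refine Finset.sum_congr rfl fun k _ => ?_
    rw [hE, Matrix.mul_diagonal, Matrix.transpose_apply]
    by_cases h : (k : ℕ) < r <;> simp [h]
  have hPi : cisProj hr Cπ U = Cπ * U * E * Uᵀ := by
    rw [cisProj, Matrix.mul_assoc, hUr]
    simp only [Matrix.mul_assoc]
  have hPiT : (cisProj hr Cπ U)ᵀ = U * E * (Uᵀ * Cπ) := by
    rw [hPi, Matrix.transpose_mul, Matrix.transpose_mul, Matrix.transpose_mul, hCπs,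
      Matrix.transpose_transpose, hE, Matrix.diagonal_transpose]
    simp only [Matrix.mul_assoc]
  have hGE : G = 1 - E := by
    rw [hE, hG, ← Matrix.diagonal_one, Matrix.diagonal_sub]
    apply congrArg Matrix.diagonal
    funext i
    by_cases h : (i : ℕ) < r <;> simp [h]
  have h1Pi : 1 - cisProj hr Cπ U = Cπ * U * G * Uᵀ := by
    rw [hGE, Matrix.mul_sub, Matrix.mul_one, Matrix.sub_mul, hB1, hPi]
  have h1PiT : 1 - (cisProj hr Cπ U)ᵀ = U * G * (Uᵀ * Cπ) := by
    have h := congrArg Matrix.transpose h1Pi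
    rw [Matrix.transpose_sub, Matrix.transpose_one, Matrix.transpose_mul, Matrix.transpose_mul,
      Matrix.transpose_mul, hCπs, Matrix.transpose_transpose] at h
    rw [h, hG, Matrix.diagonal_transpose]
    simp only [Matrix.mul_assoc]
  -- the key factorization
  have hfin : ∀ Y : Matrix (Fin n) (Fin n) ℝ,
      E * (Λ * (E * Y)) + G * (G * Y) = D * Y := by
    intro Y
    have h1 : E * Λ * E + G * G = D := by
      rw [hE, hΛ, hG, hD, Matrix.diagonal_mul_diagonal, Matrix.diagonal_mul_diagonal,
        Matrix.diagonal_mul_diagonal, Matrix.diagonal_add]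
      apply congrArg Matrix.diagonal
      funext i
      by_cases h : (i : ℕ) < r <;> simp [h]
    calc E * (Λ * (E * Y)) + G * (G * Y) = (E * Λ * E) * Y + (G * G) * Y := by
          simp only [Matrix.mul_assoc]
      _ = (E * Λ * E + G * G) * Y := (Matrix.add_mul _ _ _).symm
      _ = D * Y := by rw [h1]
  have happrox : approxPostCov hr Cπ CP U = Cπ * U * D * (Uᵀ * Cπ) := by
    rw [approxPostCov, h1PiT, h1Pi, hPiT, hPi, hCPeq]
    simp only [Matrix.mul_assoc, hmid]
    rw [← Matrix.mul_add, ← Matrix.mul_add, hfin]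
  -- positive definiteness of the building blocks
  have hDpd : D.PosDef := by
    rw [hD]
    exact Matrix.PosDef.diagonal fun i => by
      by_cases h : (i : ℕ) < r <;> simp [h, hlam i]
  have hBT : (Cπ * U)ᵀ = Uᵀ * Cπ := by rw [Matrix.transpose_mul, hCπs]
  have happd : (approxPostCov hr Cπ CP U).PosDef := by
    rw [happrox, ← hBT]
    exact posDef_conj_aux _ hDpd hBdet
  set S := posSemidefSqrt hCP.posSemidef with hSdef
  have hSps : S.PosSemidef := posSemidefSqrt_posSemidef_aux hCP.posSemidef
  have hSmul : S * S = CP := posSemidefSqrt_mul_self_aux hCP.posSemidef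
  have hSsymm : Sᵀ = S := by
    rw [← Matrix.conjTranspose_eq_transpose_of_trivial]; exact hSps.1
  have hSdet : IsUnit S.det := by
    refine isUnit_iff_ne_zero.mpr fun h0 => hCP.det_pos.ne' ?_
    rw [← hSmul, Matrix.det_mul, h0, mul_zero]
  have hSidet : IsUnit (S⁻¹).det := Matrix.isUnit_nonsing_inv_det _ hSdet
  have hSinvT : (S⁻¹)ᵀ = S⁻¹ := by rw [Matrix.transpose_nonsing_inv, hSsymm]
  have hMpd : (S⁻¹ * approxPostCov hr Cπ CP U * S⁻¹).PosDef := by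
    rw [show S⁻¹ * approxPostCov hr Cπ CP U * S⁻¹
        = S⁻¹ * approxPostCov hr Cπ CP U * (S⁻¹)ᵀ by rw [hSinvT]]
    exact posDef_conj_aux _ happd hSidet
  -- inverse of CP
  have hΛΛi : Λ * Λi = 1 := by
    rw [hΛ, hΛi, Matrix.diagonal_mul_diagonal, ← Matrix.diagonal_one]
    exact congrArg Matrix.diagonal (funext fun i => mul_inv_cancel₀ (hlam i).ne')
  have hCPinv : CP⁻¹ = U * Λi * Uᵀ := by
    apply Matrix.inv_eq_right_inv
    rw [hCPeq]
    simp only [Matrix.mul_assoc, hmid]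
    rw [← Matrix.mul_assoc Λ Λi Uᵀ, hΛΛi, one_mul, ← Matrix.mul_assoc]
    exact hB1
  set g : Fin n → ℝ := fun i => (if (i : ℕ) < r then lam i else 1) * (lam i)⁻¹ with hg
  have hDΛi : D * Λi = Matrix.diagonal g := by
    rw [hD, hΛi, Matrix.diagonal_mul_diagonal]
  have happCP : approxPostCov hr Cπ CP U * CP⁻¹
      = Cπ * U * Matrix.diagonal g * (Cπ * U)⁻¹ := by
    rw [happrox, hCPinv, Matrix.inv_eq_right_inv hB1, ← hDΛi]
    simp only [Matrix.mul_assoc, hmid]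
  have hSS : S * S⁻¹ = 1 := Matrix.mul_nonsing_inv _ hSdet
  have hCPi2 : CP⁻¹ = S⁻¹ * S⁻¹ := by rw [← hSmul, Matrix.mul_inv_rev]
  have hconj : S * (S⁻¹ * approxPostCov hr Cπ CP U * S⁻¹) * S⁻¹
      = approxPostCov hr Cπ CP U * CP⁻¹ := by
    rw [hCPi2]
    simp only [← Matrix.mul_assoc]
    rw [hSS, one_mul]
  have hchar : (S⁻¹ * approxPostCov hr Cπ CP U * S⁻¹).charpoly
      = ∏ i, (Polynomial.X - Polynomial.C (g i)) := by
    rw [← charpoly_conj_aux S (S⁻¹ * approxPostCov hr Cπ CP U * S⁻¹) hSdet, hconj, happCP,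
      charpoly_conj_aux _ _ hBdet, charpoly_diagonal_aux]
  -- the multiset of eigenvalues
  have hmult : ∀ hM : (S⁻¹ * approxPostCov hr Cπ CP U * S⁻¹).IsHermitian,
      (Finset.univ.val.map hM.eigenvalues : Multiset ℝ)
        = Multiset.replicate r (1 : ℝ) +
          (Finset.univ.filter (fun i : Fin n => r ≤ (i : ℕ))).val.map (fun i => (lam i)⁻¹) := by
    intro hM
    have hW : (hM.eigenvectorUnitary : Matrix (Fin n) (Fin n) ℝ)
        * star (hM.eigenvectorUnitary : Matrix (Fin n) (Fin n) ℝ) = 1 :=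
      Matrix.mem_unitaryGroup_iff.mp hM.eigenvectorUnitary.2
    have hWdet : IsUnit ((hM.eigenvectorUnitary : Matrix (Fin n) (Fin n) ℝ)).det :=
      Matrix.isUnit_det_of_right_inverse hW
    have hWinv : ((hM.eigenvectorUnitary : Matrix (Fin n) (Fin n) ℝ))⁻¹
        = star (hM.eigenvectorUnitary : Matrix (Fin n) (Fin n) ℝ) :=
      Matrix.inv_eq_right_inv hW
    have hofr : (RCLike.ofReal ∘ hM.eigenvalues : Fin n → ℝ) = hM.eigenvalues := by
      rw [RCLike.ofReal_real_eq_id, Function.id_comp]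
    have hspec : (S⁻¹ * approxPostCov hr Cπ CP U * S⁻¹)
        = (hM.eigenvectorUnitary : Matrix (Fin n) (Fin n) ℝ)
          * Matrix.diagonal hM.eigenvalues
          * ((hM.eigenvectorUnitary : Matrix (Fin n) (Fin n) ℝ))⁻¹ := by
      rw [hWinv, ← hofr]
      exact hM.spectral_theorem
    have hchar2 : (S⁻¹ * approxPostCov hr Cπ CP U * S⁻¹).charpoly
        = ∏ i, (Polynomial.X - Polynomial.C (hM.eigenvalues i)) := by
      have hc := charpoly_conj_aux (hM.eigenvectorUnitary : Matrix (Fin n) (Fin n) ℝ)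
        (Matrix.diagonal hM.eigenvalues) hWdet
      rw [← hspec] at hc
      rw [hc, charpoly_diagonal_aux]
    have hroots : (Finset.univ.val.map hM.eigenvalues : Multiset ℝ)
        = Finset.univ.val.map g := by
      have h1 : (∏ i, (Polynomial.X - Polynomial.C (hM.eigenvalues i))).roots
          = Finset.univ.val.map hM.eigenvalues := by
        rw [Finset.prod_eq_multiset_prod,
          show (fun i => Polynomial.X - Polynomial.C (hM.eigenvalues i))
            = ((fun a : ℝ => Polynomial.X - Polynomial.C a) ∘ hM.eigenvalues) from rfl,
          ← Multiset.map_map, Polynomial.roots_multiset_prod_X_sub_C]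
      have h2 : (∏ i, (Polynomial.X - Polynomial.C (g i))).roots = Finset.univ.val.map g := by
        rw [Finset.prod_eq_multiset_prod,
          show (fun i => Polynomial.X - Polynomial.C (g i)) = ((fun a : ℝ => Polynomial.X - Polynomial.C a) ∘ g) from rfl,
          ← Multiset.map_map, Polynomial.roots_multiset_prod_X_sub_C]
      rw [← h1, ← h2, ← hchar2, ← hchar]
    rw [hroots]
    have hsplitv : (Finset.univ.val : Multiset (Fin n))
        = (Finset.filter (fun i : Fin n => (i : ℕ) < r) Finset.univ).val
          + (Finset.filter (fun i : Fin n => r ≤ (i : ℕ)) Finset.univ).val := by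
      have hfan := Multiset.filter_add_not (fun i : Fin n => (i : ℕ) < r) Finset.univ.val
      rw [Finset.filter_val, Finset.filter_val]
      conv_lhs => rw [← hfan]
      congr 1
      apply Multiset.filter_congr
      intro x _
      simp [not_lt]
    rw [hsplitv, Multiset.map_add]
    congr 1
    · have hconst : Multiset.map g (Finset.filter (fun i : Fin n => (i : ℕ) < r) Finset.univ).val
          = Multiset.map (fun _ => (1 : ℝ))
            (Finset.filter (fun i : Fin n => (i : ℕ) < r) Finset.univ).val := by
        apply Multiset.map_congr rfl
        intro x hx
        have hxr : (x : ℕ) < r :=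
          (Finset.mem_filter.mp (Finset.mem_val.mp hx)).2
        rw [hg]
        simp [hxr, mul_inv_cancel₀ (hlam x).ne']
      rw [hconst, Multiset.map_const']
      congr 1
      rw [show Multiset.card (Finset.filter (fun i : Fin n => (i : ℕ) < r) Finset.univ).val
          = (Finset.filter (fun i : Fin n => (i : ℕ) < r) Finset.univ).card from rfl,
        filter_lt_eq_map_aux hr, Finset.card_map, Finset.card_fin]
    · apply Multiset.map_congr rfl
      intro x hx
      have hxr : r ≤ (x : ℕ) :=
        (Finset.mem_filter.mp (Finset.mem_val.mp hx)).2
      rw [hg]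
      simp [Nat.not_lt.mpr hxr]
  refine ⟨hMpd, hmult, ?_⟩
  -- the Förstner distance
  rw [forstnerDist, dif_pos hCP]
  rw [← hSdef]
  rw [dif_pos hMpd.1]
  have hm := hmult hMpd.1
  have hstep1 : (∑ i, Real.log (hMpd.1.eigenvalues i) ^ 2)
      = (Multiset.map (fun t => Real.log t ^ 2)
          (Multiset.map hMpd.1.eigenvalues Finset.univ.val)).sum := by
    rw [Multiset.map_map]; rfl
  rw [hstep1, hm, Multiset.map_add, Multiset.sum_add, Multiset.map_replicate]
  rw [show Real.log 1 ^ 2 = 0 by simp, Multiset.sum_replicate, smul_zero, zero_add,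
    Multiset.map_map]
  have : Multiset.map ((fun t => Real.log t ^ 2) ∘ fun i => (lam i)⁻¹)
        (Finset.univ.filter (fun i : Fin n => r ≤ (i : ℕ))).val
      = Multiset.map (fun i => Real.log (lam i) ^ 2)
        (Finset.univ.filter (fun i : Fin n => r ≤ (i : ℕ))).val := by
    apply Multiset.map_congr rfl
    intro x _
    simp [Real.log_inv]
  rw [this]
  rfl
end
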